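/- For any vector ψ ∈ ℂ^d and integer 1 ≤ m ≤ d, the m-distillation norm admits the dual representation ‖ψ‖_{[m]} = max { |⟨ψ, ω⟩| : ω ∈ ℂ^d, ‖ω‖_∞ ≤ 1, ‖ω‖₂ = √m }. -/

import Mathlib

open Matrix BigOperators Complex ComplexOrder

noncomputable section

variable {ι : Type*} [Fintype ι] [DecidableEq ι]

/-- A density matrix: positive semidefinite with unit trace. -/
def IsDensityMatrix (ρ : Matrix ι ι ℂ) : Prop := ρ.PosSemidef ∧ ρ.trace = 1

/-- The rank-one projector |ψ⟩⟨ψ| associated to a vector. -/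
def pureState (ψ : ι → ℂ) : Matrix ι ι ℂ := Matrix.of fun i j => ψ i * (starRingEnd ℂ) (ψ j)

/-- The trace norm ‖A‖₁ = Tr √(AᴴA). -/
def traceNorm (A : Matrix ι ι ℂ) : ℝ :=
  ((((Matrix.isHermitian_conjTranspose_mul_self A).eigenvectorUnitary : Matrix ι ι ℂ) *
    diagonal (((↑) : ℝ → ℂ) ∘ Real.sqrt ∘ (Matrix.isHermitian_conjTranspose_mul_self A).eigenvalues) *
    (star ((Matrix.isHermitian_conjTranspose_mul_self A).eigenvectorUnitary : Matrix ι ι ℂ))).trace).re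

open Classical in
/-- Matrix square root (junk value 0 on matrices that are not PSD). -/
def matSqrt (A : Matrix ι ι ℂ) : Matrix ι ι ℂ := if h : A.PosSemidef then
  (h.1.eigenvectorUnitary : Matrix ι ι ℂ) * diagonal (((↑) : ℝ → ℂ) ∘ Real.sqrt ∘ h.1.eigenvalues) *
    (star (h.1.eigenvectorUnitary : Matrix ι ι ℂ)) else 0

/-- Fidelity F(ρ,σ) = ‖√ρ√σ‖₁². -/
def fidelity (ρ σ : Matrix ι ι ℂ) : ℝ := (traceNorm (matSqrt ρ * matSqrt σ))^2

/-- The dephasing map Δ, keeping only the diagonal. -/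
def deph (ρ : Matrix ι ι ℂ) : Matrix ι ι ℂ := Matrix.diagonal (fun i => ρ i i)

/-- The m-distillation norm ‖ψ‖_{[m]} = min_x (‖ψ-x‖₁ + √m ‖x‖₂). -/
def distNorm (m : ℕ) (ψ : ι → ℂ) : ℝ :=
  ⨅ x : ι → ℂ, ((∑ i, ‖ψ i - x i‖) +
    Real.sqrt m * Real.sqrt (∑ i, (‖x i‖)^2))

/-- M_m: convex combinations of pure states with ℓ∞ norm at most 1/√m. -/
def Mset (m : ℕ) : Set (Matrix ι ι ℂ) :=
  {ω | ∃ (n : ℕ) (p : Fin n → ℝ) (ψ : Fin n → ι → ℂ),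
    (∀ i, 0 ≤ p i) ∧ (∑ i, p i = 1) ∧
    (∀ i, ∑ j, (‖ψ i j‖)^2 = 1) ∧
    (∀ i j, ‖ψ i j‖ ≤ 1 / Real.sqrt m) ∧
    ω = ∑ i, p i • pureState (ψ i)}

/-- N_m: density matrices with all diagonal entries at most 1/m. -/
def Nset (m : ℕ) : Set (Matrix ι ι ℂ) :=
  {ω | IsDensityMatrix ω ∧ ∀ i, (ω i i).re ≤ 1 / m}

/-- Optimal fidelity of assisted distillation F_A(ρ,m) = max_{ω ∈ M_m} F(ρ,ω). -/
def FA (ρ : Matrix ι ι ℂ) (m : ℕ) : ℝ :=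
  sSup {r : ℝ | ∃ ω ∈ Mset (ι := ι) m, r = fidelity ρ ω}


/-!
Weak duality is Hölder twice: split `⟨ψ, ω⟩ = ⟨ψ - x, ω⟩ + ⟨x, ω⟩`, bound the first term by
`‖ψ - x‖₁ ‖ω‖_∞` and the second by Cauchy–Schwarz. For attainment, rotate each coordinate by the
phase of `ψ`, reducing to `a = |ψ| ≥ 0`. If `a` has fewer than `m` nonzero entries, take `x = 0`
and `ω` the indicator of an `m`-set containing the support of `a`. Otherwise the intermediate value
theorem gives a truncation level `c > 0` with `∑ min(aᵢ, c)² = m c²`, and `x = min(a, c)`,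
`ω = x / c` make both Hölder steps tight.
-/

section DistillationNormDuality

open Finset ComplexConjugate

variable {α : Type*} [Fintype α]

def distObjective (m : ℝ) (ψ x : α → ℂ) : ℝ :=
  ∑ i, ‖ψ i - x i‖ + √m * √(∑ i, ‖x i‖ ^ 2)

theorem distObjective_nonneg (m : ℝ) (ψ x : α → ℂ) : 0 ≤ distObjective m ψ x := by
  unfold distObjective
  positivity

theorem norm_sum_conj_mul_le_distObjective (ψ ω x : α → ℂ) {m : ℝ} (hω : ∀ i, ‖ω i‖ ≤ 1)
    (hω₂ : ∑ i, ‖ω i‖ ^ 2 = m) : ‖∑ i, conj (ψ i) * ω i‖ ≤ distObjective m ψ x := by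
  have hsplit : ∑ i, conj (ψ i) * ω i = ∑ i, conj (ψ i - x i) * ω i + ∑ i, conj (x i) * ω i := by
    simp only [map_sub, sub_mul, sum_sub_distrib, sub_add_cancel]
  have hℓ₁ : ‖∑ i, conj (ψ i - x i) * ω i‖ ≤ ∑ i, ‖ψ i - x i‖ := by
    refine (norm_sum_le _ _).trans (sum_le_sum fun i _ => ?_)
    rw [norm_mul, Complex.norm_conj]
    exact mul_le_of_le_one_right (norm_nonneg _) (hω i)
  have hℓ₂ : ‖∑ i, conj (x i) * ω i‖ ≤ √(∑ i, ‖x i‖ ^ 2) * √m :=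
    calc _ ≤ ∑ i, ‖x i‖ * ‖ω i‖ :=
          (norm_sum_le _ _).trans_eq (by simp only [norm_mul, Complex.norm_conj])
      _ ≤ _ := hω₂ ▸ Real.sum_mul_le_sqrt_mul_sqrt _ _ _
  rw [hsplit, distObjective, mul_comm √m]
  exact (norm_add_le _ _).trans (add_le_add hℓ₁ hℓ₂)

theorem Complex.conj_ofReal_mul_mul_ofReal_mul {u : ℂ} (hu : ‖u‖ = 1) (r s : ℝ) :
    conj (r * u) * (s * u) = (r * s : ℝ) := by
  rw [map_mul, Complex.conj_ofReal, mul_mul_mul_comm, mul_comm (conj u), Complex.mul_conj', hu]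
  push_cast
  ring

theorem Complex.norm_ofReal_mul_sub_ofReal_mul {u : ℂ} (hu : ‖u‖ = 1) (r s : ℝ) :
    ‖r * u - s * u‖ = |r - s| := by
  rw [← sub_mul, norm_mul, hu, mul_one, ← Complex.ofReal_sub, Complex.norm_real, Real.norm_eq_abs]

theorem exists_sum_min_sq_eq (a : α → ℝ) (ha : ∀ i, 0 ≤ a i) {m : ℕ} (hm : 1 ≤ m)
    (hS : m ≤ #{i | a i ≠ 0}) : ∃ c > 0, ∑ i, min (a i) c ^ 2 = m * c ^ 2 := by
  set S : Finset α := {i | a i ≠ 0}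
  have hmem : ∀ i, i ∈ S ↔ a i ≠ 0 := fun i => by simp [S]
  have hSne : S.Nonempty := card_pos.mp (by omega)
  set F : ℝ → ℝ := fun t => ∑ i, min (a i) t ^ 2 - m * t ^ 2
  -- `F p = (#S - m) p² ≥ 0` at the smallest nonzero `a i`, and `F q ≤ 0` at `q = ∑ i, a i`.
  set p := S.inf' hSne a
  have hp : 0 < p := (lt_inf'_iff _).2 fun i hi => (ha i).lt_of_ne' ((hmem i).1 hi)
  set q := ∑ i, a i
  have hpq : p ≤ q := by
    obtain ⟨j, hj⟩ := hSne
    exact (inf'_le a hj).trans (single_le_sum (fun i _ => ha i) (mem_univ j))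
  have hFp : 0 ≤ F p := by
    have : (m : ℝ) * p ^ 2 ≤ ∑ i, min (a i) p ^ 2 :=
      calc (m : ℝ) * p ^ 2 ≤ #S * p ^ 2 := by gcongr
        _ = ∑ i ∈ S, min (a i) p ^ 2 := by
          rw [← nsmul_eq_mul, ← sum_const]
          exact sum_congr rfl fun i hi => by rw [min_eq_right (inf'_le a hi)]
        _ ≤ _ := sum_le_sum_of_subset_of_nonneg (subset_univ S) fun i _ _ => sq_nonneg _
    linarith
  have hFq : F q ≤ 0 := by
    have hmin : ∀ i, min (a i) q = a i := fun i =>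
      min_eq_left (single_le_sum (fun j _ => ha j) (mem_univ i))
    have hq : ∑ i, a i ^ 2 ≤ q ^ 2 := sum_sq_le_sq_sum_of_nonneg fun i _ => ha i
    have hm' : (1 : ℝ) ≤ m := by exact_mod_cast hm
    simp only [F, hmin]
    nlinarith [sq_nonneg q]
  have hFcont : Continuous F := by fun_prop
  obtain ⟨c, hc, hFc⟩ := intermediate_value_Icc' hpq hFcont.continuousOn ⟨hFq, hFp⟩
  exact ⟨c, hp.trans_le hc.1, sub_eq_zero.mp hFc⟩

theorem exists_certificate_of_card_support_le (a : α → ℝ) (ha : ∀ i, 0 ≤ a i) {m : ℕ}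
    (hS : #{i | a i ≠ 0} ≤ m) (hmα : m ≤ Fintype.card α) :
    ∃ w y : α → ℝ, (∀ i, |w i| ≤ 1) ∧ ∑ i, w i ^ 2 = m ∧
      ∑ i, a i * w i = ∑ i, |a i - y i| + √m * √(∑ i, y i ^ 2) := by
  classical
  obtain ⟨T, hST, -, hT⟩ := exists_subsuperset_card_eq (subset_univ _) hS (by simpa using hmα)
  have ha_out : ∀ i ∉ T, a i = 0 := fun i hi => by
    by_contra h
    exact hi (hST (by simpa using h))
  refine ⟨fun i => if i ∈ T then 1 else 0, 0, fun i => by dsimp only; split_ifs <;> simp, ?_, ?_⟩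
  · simp [ite_pow, hT]
  · simp only [mul_ite, mul_one, mul_zero, sum_ite_mem, univ_inter, Pi.zero_apply, sub_zero,
      abs_of_nonneg (ha _), zero_pow two_ne_zero, sum_const_zero, Real.sqrt_zero, add_zero]
    exact sum_subset (subset_univ T) fun i _ hi => ha_out i hi

theorem exists_certificate_of_le_card_support (a : α → ℝ) (ha : ∀ i, 0 ≤ a i) {m : ℕ}
    (hm : 1 ≤ m) (hS : m ≤ #{i | a i ≠ 0}) :
    ∃ w y : α → ℝ, (∀ i, |w i| ≤ 1) ∧ ∑ i, w i ^ 2 = m ∧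
      ∑ i, a i * w i = ∑ i, |a i - y i| + √m * √(∑ i, y i ^ 2) := by
  obtain ⟨c, hc, hcm⟩ := exists_sum_min_sq_eq a ha hm hS
  have hmin_nonneg : ∀ i, 0 ≤ min (a i) c := fun i => le_min (ha i) hc.le
  refine ⟨fun i => min (a i) c / c, fun i => min (a i) c, fun i => ?_, ?_, ?_⟩
  · rw [abs_of_nonneg (div_nonneg (hmin_nonneg i) hc.le), div_le_one hc]
    exact min_le_right _ _
  · simp only [div_pow, ← sum_div, hcm]
    field_simp
  · have hpt : ∀ i, a i * (min (a i) c / c) = |a i - min (a i) c| + min (a i) c ^ 2 / c := by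
      intro i
      rw [abs_of_nonneg (sub_nonneg.2 (min_le_left _ _))]
      field_simp
      rcases le_total (a i) c with h | h <;> simp only [min_eq_left, min_eq_right, h] <;> ring
    rw [sum_congr rfl fun i _ => hpt i, sum_add_distrib, ← sum_div, hcm,
      Real.sqrt_mul (Nat.cast_nonneg m), Real.sqrt_sq hc.le, ← mul_assoc,
      Real.mul_self_sqrt (Nat.cast_nonneg m)]
    field_simp

theorem exists_certificate (a : α → ℝ) (ha : ∀ i, 0 ≤ a i) {m : ℕ} (hm : 1 ≤ m)
    (hmα : m ≤ Fintype.card α) :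
    ∃ w y : α → ℝ, (∀ i, |w i| ≤ 1) ∧ ∑ i, w i ^ 2 = m ∧
      ∑ i, a i * w i = ∑ i, |a i - y i| + √m * √(∑ i, y i ^ 2) :=
  (le_total #{i | a i ≠ 0} m).elim (exists_certificate_of_card_support_le a ha · hmα)
    (exists_certificate_of_le_card_support a ha hm)

theorem exists_norm_sum_conj_mul_eq_distObjective (ψ : α → ℂ) {m : ℕ} (hm : 1 ≤ m)
    (hmα : m ≤ Fintype.card α) :
    ∃ ω x : α → ℂ, (∀ i, ‖ω i‖ ≤ 1) ∧ ∑ i, ‖ω i‖ ^ 2 = m ∧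
      ‖∑ i, conj (ψ i) * ω i‖ = distObjective m ψ x := by
  obtain ⟨w, y, hw, hw₂, hwy⟩ := exists_certificate (‖ψ ·‖) (fun i => norm_nonneg _) hm hmα
  set u : α → ℂ := fun i => Complex.exp (Complex.arg (ψ i) * Complex.I)
  have hu : ∀ i, ‖u i‖ = 1 := fun i => Complex.norm_exp_ofReal_mul_I _
  have hψ : ∀ i, ψ i = ‖ψ i‖ * u i := fun i => (Complex.norm_mul_exp_arg_mul_I _).symm
  refine ⟨fun i => w i * u i, fun i => y i * u i, fun i => ?_, ?_, ?_⟩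
  · simpa [hu] using hw i
  · simpa [hu] using hw₂
  · have hinner : ∀ i, conj (ψ i) * (w i * u i) = ((‖ψ i‖ * w i : ℝ) : ℂ) := fun i => by
      conv_lhs => rw [hψ i]
      exact Complex.conj_ofReal_mul_mul_ofReal_mul (hu i) _ _
    have hdist : ∀ i, ‖ψ i - y i * u i‖ = |‖ψ i‖ - y i| := fun i => by
      conv_lhs => rw [hψ i]
      exact Complex.norm_ofReal_mul_sub_ofReal_mul (hu i) _ _
    have hx : ∀ i, ‖(y i : ℂ) * u i‖ ^ 2 = y i ^ 2 := fun i => by simp [hu]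
    have hval : ∑ i, ‖ψ i‖ * w i = distObjective m ψ (fun i => y i * u i) := by
      simp only [hwy, distObjective, hdist, hx]
    rw [sum_congr rfl fun i _ => hinner i, ← Complex.ofReal_sum, hval, Complex.norm_real,
      Real.norm_of_nonneg (distObjective_nonneg _ _ _)]

theorem norm_sum_conj_mul_le_distNorm (ψ ω : α → ℂ) {m : ℕ} (hω : ∀ i, ‖ω i‖ ≤ 1)
    (hω₂ : ∑ i, ‖ω i‖ ^ 2 = m) : ‖∑ i, conj (ψ i) * ω i‖ ≤ distNorm m ψ :=
  le_ciInf fun x => norm_sum_conj_mul_le_distObjective ψ ω x hω hω₂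

theorem distNorm_le_distObjective (m : ℕ) (ψ x : α → ℂ) : distNorm m ψ ≤ distObjective m ψ x :=
  ciInf_le ⟨0, Set.forall_mem_range.2 (distObjective_nonneg m ψ)⟩ x

end DistillationNormDuality

theorem stmt5 {d : ℕ} (ψ : Fin d → ℂ) (m : ℕ) (hm : 1 ≤ m) (hmd : m ≤ d) :
    IsGreatest {r : ℝ | ∃ ω : Fin d → ℂ,
      (∀ i, ‖ω i‖ ≤ 1) ∧ (∑ i, (‖ω i‖)^2 = m) ∧
      r = ‖∑ i, (starRingEnd ℂ) (ψ i) * ω i‖} (distNorm m ψ) := by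
  refine ⟨?_, fun r ⟨ω, hω, hω₂, hr⟩ => hr ▸ norm_sum_conj_mul_le_distNorm ψ ω hω hω₂⟩
  obtain ⟨ω, x, hω, hω₂, hωx⟩ :=
    exists_norm_sum_conj_mul_eq_distObjective ψ hm (by rwa [Fintype.card_fin])
  refine ⟨ω, hω, hω₂, le_antisymm ?_ (norm_sum_conj_mul_le_distNorm ψ ω hω hω₂)⟩
  exact hωx ▸ distNorm_le_distObjective m ψ x

end
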